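/- For all t > 0 and Z ∼ N(0,1), E[1/(t² + Z²)] = Φ̄(t)/(t·φ(t)). -/

import Mathlib

/-!
Write `t / (t² + z²) = ∫₀^∞ e^{-tu} cos (zu) du`. By Fubini, `E[t / (t² + Z²)]` is the Laplace
transform of the real part of the characteristic function of `Z`, here `∫₀^∞ e^{-tu - u²/2} du`.
Completing the square, `-tu - u²/2 = t²/2 - (u + t)²/2`, turns this into `Φ̄(t) / φ(t)`.
-/

open MeasureTheory ProbabilityTheory

/-- The standard normal density `φ`. -/
noncomputable def stdPdf (x : ℝ) : ℝ :=
  (Real.sqrt (2 * Real.pi))⁻¹ * Real.exp (-x ^ 2 / 2)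

/-- The standard normal tail probability `Φ̄(x) = ∫_x^∞ φ`. -/
noncomputable def stdTail (x : ℝ) : ℝ := ∫ t in Set.Ioi x, stdPdf t

open Real Set

theorem stdPdf_pos (x : ℝ) : 0 < stdPdf x := by
  unfold stdPdf
  positivity

theorem integral_exp_neg_mul_mul_cos_Ioi {t : ℝ} (ht : 0 < t) (z : ℝ) :
    ∫ u in Ioi 0, exp (-t * u) * cos (z * u) = t / (t ^ 2 + z ^ 2) := by
  have hre : (-t + z * Complex.I).re < 0 := by simpa using ht
  have key := congrArg Complex.re (integral_exp_mul_complex_Ioi hre 0)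
  rw [← RCLike.re_eq_complex_re, ← integral_re (integrableOn_exp_mul_complex_Ioi hre 0)] at key
  have hlhs (u : ℝ) :
      RCLike.re (Complex.exp ((-t + z * Complex.I) * u)) = exp (-t * u) * cos (z * u) := by
    rw [RCLike.re_eq_complex_re, Complex.exp_re]
    simp
  have hrhs : RCLike.re (-Complex.exp ((-t + z * Complex.I) * (0 : ℝ)) / (-t + z * Complex.I))
      = t / (t ^ 2 + z ^ 2) := by
    simp [Complex.div_re, Complex.normSq, sq]
  simpa only [hlhs, hrhs] using key

theorem integral_cos_mul_eq_re_charFun {μ : Measure ℝ} [IsFiniteMeasure μ] (u : ℝ) :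
    ∫ z, cos (u * z) ∂μ = (charFun μ u).re := by
  rw [charFun_apply_real, ← RCLike.re_eq_complex_re, ← integral_re]
  · congr 1 with z
    rw [RCLike.re_eq_complex_re, ← Complex.ofReal_mul, Complex.exp_ofReal_mul_I_re]
  · refine Integrable.of_bound (by fun_prop) 1 (ae_of_all _ fun z => ?_)
    rw [← Complex.ofReal_mul, Complex.norm_exp_ofReal_mul_I]

theorem re_charFun_gaussianReal_zero_one (u : ℝ) :
    (charFun (gaussianReal 0 1) u).re = exp (-u ^ 2 / 2) := by
  rw [charFun_gaussianReal]
  simp [Complex.exp_re, ← Complex.ofReal_pow, neg_div]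

theorem integral_div_sq_add_sq_eq_integral_exp_mul_re_charFun {μ : Measure ℝ} [IsFiniteMeasure μ]
    {t : ℝ} (ht : 0 < t) :
    ∫ z, t / (t ^ 2 + z ^ 2) ∂μ = ∫ u in Ioi 0, exp (-t * u) * (charFun μ u).re := by
  have hint : Integrable (Function.uncurry fun z u => exp (-t * u) * cos (z * u))
      (μ.prod (volume.restrict (Ioi 0))) := by
    refine ((integrable_const (1 : ℝ)).mul_prod
      (integrableOn_exp_mul_Ioi (neg_lt_zero.2 ht) 0)).mono' (by fun_prop) (ae_of_all _ ?_)
    rintro ⟨z, u⟩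
    simpa [abs_of_pos (exp_pos _)] using
      mul_le_mul_of_nonneg_left (abs_cos_le_one (z * u)) (exp_pos (-t * u)).le
  calc ∫ z, t / (t ^ 2 + z ^ 2) ∂μ
      = ∫ z, (∫ u in Ioi 0, exp (-t * u) * cos (z * u)) ∂μ := by
        simp_rw [integral_exp_neg_mul_mul_cos_Ioi ht]
    _ = ∫ u in Ioi 0, ∫ z, exp (-t * u) * cos (z * u) ∂μ := integral_integral_swap hint
    _ = ∫ u in Ioi 0, exp (-t * u) * (charFun μ u).re := by
        simp_rw [integral_const_mul, ← integral_cos_mul_eq_re_charFun, mul_comm]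

theorem stdTail_eq_stdPdf_mul_integral (t : ℝ) :
    stdTail t = stdPdf t * ∫ u in Ioi 0, exp (-t * u) * exp (-u ^ 2 / 2) := by
  rw [← integral_const_mul, stdTail,
    ← (measurePreserving_add_right volume t).setIntegral_preimage_emb
      (measurableEmbedding_addRight t), preimage_add_const_Ioi, sub_self]
  congr 1 with u
  simp only [stdPdf, mul_assoc, ← exp_add]
  ring_nf

/-- For `t > 0` and `Z ∼ N(0,1)`, `E[1/(t² + Z²)] = Φ̄(t)/(t·φ(t))`. -/
theorem stmt_11 (t : ℝ) (ht : 0 < t) :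
    (∫ z, 1 / (t ^ 2 + z ^ 2) ∂(gaussianReal 0 1)) = stdTail t / (t * stdPdf t) := by
  have hscale : ∫ z, 1 / (t ^ 2 + z ^ 2) ∂(gaussianReal 0 1)
      = t⁻¹ * ∫ z, t / (t ^ 2 + z ^ 2) ∂(gaussianReal 0 1) := by
    rw [← integral_const_mul]
    congr 1 with z
    field_simp
  rw [hscale, integral_div_sq_add_sq_eq_integral_exp_mul_re_charFun ht,
    stdTail_eq_stdPdf_mul_integral]
  simp_rw [re_charFun_gaussianReal_zero_one]
  field_simp [(stdPdf_pos t).ne']
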